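/- Each of the grid hypergraphs H_m from the Baranyai construction is an edge-minimal 2-hypertree: it is chain-connected, contains no semicycle and no chain of length ≥ 3, and deleting any edge {v_{ij}, v_{r s_1}, …, v_{r s_{k−1}}} leaves each pair (v_{ij}, v_{r s_h}) chain-disconnected. -/

import Mathlib

variable {V : Type*} [DecidableEq V]

/-- The list of consecutive `k`-windows (as finsets) of a vertex sequence. -/
def windows (k : ℕ) (w : List V) : List (Finset V) :=
  (List.range (w.length + 1 - k)).map fun i => ((w.drop i).take k).toFinset

/-- `w` is the vertex sequence of a chain: `v₁ ≠ v_l`, each window is a `k`-set,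
and the `l - k + 1` window edges are pairwise distinct. -/
def IsChainSeq (k : ℕ) (w : List V) : Prop :=
  k ≤ w.length ∧ w.head? ≠ w.getLast? ∧
  (∀ e ∈ windows k w, e.card = k) ∧ (windows k w).Nodup

/-- `w` is the vertex sequence of a semicycle: `v₁ = v_l`, each window is a `k`-set,
and the `l - k + 1` window edges are pairwise distinct. -/
def IsSemicycleSeq (k : ℕ) (w : List V) : Prop :=
  k ≤ w.length ∧ w.head? = w.getLast? ∧
  (∀ e ∈ windows k w, e.card = k) ∧ (windows k w).Nodup

/-- A hypergraph with edge set `E` contains no semicycle as a subhypergraph. -/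
def SemicycleFree (k : ℕ) (E : Finset (Finset V)) : Prop :=
  ¬ ∃ w : List V, IsSemicycleSeq k w ∧ ∀ e ∈ windows k w, e ∈ E

/-- Every two distinct vertices of `S` lie in a common chain subhypergraph of `E`. -/
def ChainConnOn (k : ℕ) (S : Finset V) (E : Finset (Finset V)) : Prop :=
  ∀ u ∈ S, ∀ v ∈ S, u ≠ v →
    ∃ w : List V, IsChainSeq k w ∧ (∀ e ∈ windows k w, e ∈ E) ∧ u ∈ w ∧ v ∈ w

/-- Chain-connectedness on the whole (finite) vertex type. -/
def ChainConn [Fintype V] (k : ℕ) (E : Finset (Finset V)) : Prop :=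
  ChainConnOn k Finset.univ E

/-- A `k`-uniform hypertree: chain-connected and semicycle-free. -/
def IsHypertree [Fintype V] (k : ℕ) (E : Finset (Finset V)) : Prop :=
  (∀ e ∈ E, e.card = k) ∧ ChainConn k E ∧ SemicycleFree k E

/-- Every chain subhypergraph of `E` has length (number of edges) at most `l`. -/
def ChainsLenLE (k l : ℕ) (E : Finset (Finset V)) : Prop :=
  ∀ w : List V, IsChainSeq k w → (∀ e ∈ windows k w, e ∈ E) →
    w.length + 1 - k ≤ l

/-- An `l`-hypertree: a hypertree all of whose chains have length at most `l`. -/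
def IsLHypertree [Fintype V] (k l : ℕ) (E : Finset (Finset V)) : Prop :=
  IsHypertree k E ∧ ChainsLenLE k l E

/-- Edge-minimal: deleting any edge destroys chain-connectedness. -/
def EdgeMinimal [Fintype V] (k : ℕ) (E : Finset (Finset V)) : Prop :=
  ∀ e ∈ E, ¬ ChainConn k (E.erase e)

/-- Edge-maximal: adding any new `k`-set as an edge creates a semicycle. -/
def EdgeMaximal [Fintype V] (k : ℕ) (E : Finset (Finset V)) : Prop :=
  ∀ s : Finset V, s.card = k → s ∉ E → ¬ SemicycleFree k (insert s E)

/-- `S` is a (tight) star subhypergraph of `E`: a nonempty set of edges of `E`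
all containing a common `(k-1)`-set kernel. -/
def IsStarSub (k : ℕ) (E S : Finset (Finset V)) : Prop :=
  S ⊆ E ∧ S.Nonempty ∧ ∃ K : Finset V, K.card = k - 1 ∧ ∀ e ∈ S, K ⊆ e

/-- `S` is a maximal star subhypergraph of `E`. -/
def IsMaxStar (k : ℕ) (E S : Finset (Finset V)) : Prop :=
  IsStarSub k E S ∧ ∀ T, IsStarSub k E T → S ⊆ T → S = T

/-!
Think of the first coordinate of a vertex as its row. In `H_m` every edge meets two rows, a
cross-row pair of vertices lies in at most one edge, and two edges sharing `k - 1` vertices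
share their body `s`, which lies in a single `B i` (the `B i` are disjoint), so they differ only
in their apexes, both in row `i`. Consecutive windows of a chain are distinct edges sharing `k - 1 ≥ 2` vertices,
so each overlap lies in one row; with three windows the two overlaps would put the middle edge in
a single row. Hence chains have at most two edges, while a semicycle needs three. In a chain of
at most two edges, two vertices in no common window are the apexes exchanged between the two
windows, hence in one row; so a cross-row pair lies in a common window, and deleting the unique
edge through the pair separates it.
-/

open Finset

lemma getElem_zero_eq_getElem_length_sub_one {α : Type*} {w : List α} (h : 0 < w.length)
    (hw : w.head? = w.getLast?) : w[0] = w[w.length - 1] := by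
  rw [List.head?_eq_getElem?, List.getLast?_eq_getElem?, List.getElem?_eq_getElem h,
    List.getElem?_eq_getElem (by omega)] at hw
  exact Option.some_injective _ hw

lemma head?_ne_getLast?_of_nodup {α : Type*} {w : List α} (h : w.Nodup) (hw : 2 ≤ w.length) :
    w.head? ≠ w.getLast? := fun hends => by
  have := h.getElem_inj_iff.1 (getElem_zero_eq_getElem_length_sub_one (by omega) hends)
  omega

def window (k : ℕ) (w : List V) (i : ℕ) : Finset V := ((w.drop i).take k).toFinset

section Windows

variable {k : ℕ} {w : List V}

lemma windows_eq_map_window :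
    windows k w = (List.range (w.length + 1 - k)).map (window k w) := rfl

lemma mem_windows {e : Finset V} :
    e ∈ windows k w ↔ ∃ i, i + k ≤ w.length ∧ window k w i = e := by
  simp only [windows_eq_map_window, List.mem_map, List.mem_range]
  exact exists_congr fun i => and_congr_left fun _ => by omega

lemma window_mem_windows {i : ℕ} (h : i + k ≤ w.length) :
    window k w i ∈ windows k w :=
  mem_windows.2 ⟨i, h, rfl⟩

lemma mem_window {i : ℕ} {x : V} :
    x ∈ window k w i ↔ ∃ (a : ℕ) (ha : a < w.length), i ≤ a ∧ a < i + k ∧ w[a] = x := by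
  simp only [window, List.mem_toFinset, List.mem_iff_getElem, List.getElem_take,
    List.getElem_drop, List.length_take, List.length_drop]
  constructor
  · rintro ⟨b, hb, rfl⟩
    exact ⟨i + b, by omega, by omega, by omega, rfl⟩
  · rintro ⟨a, ha, hia, hai, rfl⟩
    exact ⟨a - i, by omega, by congr 1; omega⟩

lemma getElem_mem_window {i a : ℕ} (ha : a < w.length) (hia : i ≤ a)
    (hai : a < i + k) : w[a] ∈ window k w i :=
  mem_window.2 ⟨a, ha, hia, hai, rfl⟩

lemma window_ne_window {i i' : ℕ} (hnd : (windows k w).Nodup)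
    (hi : i + k ≤ w.length) (hi' : i' + k ≤ w.length) (hne : i ≠ i') :
    window k w i ≠ window k w i' := fun h =>
  hne (List.inj_on_of_nodup_map hnd (List.mem_range.2 (by omega))
    (List.mem_range.2 (by omega)) h)

lemma windows_of_length_eq (h : w.length = k) :
    windows k w = [w.toFinset] := by
  simp [windows_eq_map_window, h, window, List.take_of_length_le h.le]

lemma le_card_window_inter_window_succ {i : ℕ} (hk : 1 ≤ k)
    (h : i + k + 1 ≤ w.length) (hc : #(window k w (i + 1)) = k) :
    k - 1 ≤ #(window k w i ∩ window k w (i + 1)) := by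
  have hsub : window (k - 1) w (i + 1) ⊆ window k w i ∩ window k w (i + 1) := by
    intro x hx
    obtain ⟨a, ha, h1, h2, rfl⟩ := mem_window.1 hx
    exact mem_inter.2 ⟨getElem_mem_window ha (by omega) (by omega),
      getElem_mem_window ha h1 (by omega)⟩
  have hsup : window k w (i + 1) ⊆ insert w[i + k] (window (k - 1) w (i + 1)) := by
    intro x hx
    obtain ⟨a, ha, h1, h2, rfl⟩ := mem_window.1 hx
    rcases eq_or_lt_of_le (Nat.le_of_lt_succ (show a < i + k + 1 by omega)) with rfl | hlt
    · exact mem_insert_self _ _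
    · exact mem_insert_of_mem (getElem_mem_window ha h1 (by omega))
  have := (card_le_card hsup).trans (card_insert_le _ _)
  have := card_le_card hsub
  omega

lemma mem_window_zero_or_eq_getElem {x : V} (hlen : w.length ≤ k + 1)
    (hx : x ∈ w) : x ∈ window k w 0 ∨ ∃ h : k < w.length, x = w[k] := by
  obtain ⟨a, ha, rfl⟩ := List.mem_iff_getElem.1 hx
  by_cases hak : a < k
  · exact Or.inl (getElem_mem_window ha (Nat.zero_le a) (by omega))
  · obtain rfl : a = k := by omega
    exact Or.inr ⟨ha, rfl⟩

/-- A semicycle needs at least three windows: with one window its `k` vertices would repeat,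
with two windows the windows would coincide. -/
lemma IsSemicycleSeq.add_two_le_length (hk : 2 ≤ k)
    (h : IsSemicycleSeq k w) : k + 2 ≤ w.length := by
  obtain ⟨hkw, hw, hc, hnd⟩ := h
  have hends := getElem_zero_eq_getElem_length_sub_one (by omega) hw
  by_contra hlt
  rcases (show w.length = k ∨ w.length = k + 1 by omega) with hlen | hlen
  · have hsub : window k w 0 ⊆ window (k - 1) w 0 := by
      intro x hx
      obtain ⟨a, ha, -, hak, rfl⟩ := mem_window.1 hx
      by_cases hlast : a = w.length - 1
      · simp only [hlast, ← hends]
        exact getElem_mem_window (by omega) le_rfl (by omega)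
      · exact getElem_mem_window ha (Nat.zero_le a) (by omega)
    have h1 := card_le_card hsub
    have h2 := List.toFinset_card_le ((w.drop 0).take (k - 1))
    rw [hc _ (window_mem_windows (by omega))] at h1
    simp only [window, List.length_take] at h1 h2
    omega
  · refine window_ne_window hnd (i := 0) (i' := 1) (by omega) (by omega) zero_ne_one ?_
    ext x
    simp only [mem_window]
    constructor
    · rintro ⟨a, ha, -, hak, rfl⟩
      rcases Nat.eq_zero_or_pos a with rfl | hpos
      · exact ⟨w.length - 1, by omega, by omega, by omega, hends.symm⟩
      · exact ⟨a, ha, hpos, by omega, rfl⟩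
    · rintro ⟨a, ha, hpos, hak, rfl⟩
      by_cases hlast : a = w.length - 1
      · exact ⟨0, by omega, le_rfl, by omega, by simp only [hlast, hends]⟩
      · exact ⟨a, ha, Nat.zero_le a, by omega, rfl⟩

end Windows

lemma windows_cons_toList_append {k : ℕ} {M : Finset V} {a b : V} (hk : 1 ≤ k)
    (hM : #M = k - 1) : windows k (a :: (M.toList ++ [b])) = [insert a M, insert b M] := by
  have hlen : (a :: (M.toList ++ [b])).length + 1 - k = 2 := by simp [hM]; omega
  rw [windows_eq_map_window, hlen]
  obtain ⟨k, rfl⟩ : ∃ k', k = k' + 1 := ⟨k - 1, by omega⟩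
  simp only [List.range_succ, List.range_zero, List.map, window, List.drop_zero, List.drop_one,
    List.tail_cons, List.take_succ_cons, List.nil_append, List.singleton_append]
  rw [List.take_left' (by simpa using hM), List.take_of_length_le (by simp [hM])]
  simp

def ChainJoins (k : ℕ) (E : Finset (Finset V)) (u v : V) : Prop :=
  ∃ w : List V, IsChainSeq k w ∧ (∀ e ∈ windows k w, e ∈ E) ∧ u ∈ w ∧ v ∈ w

section Chains

variable {k : ℕ} {E : Finset (Finset V)}

lemma ChainJoins.symm {u v : V} (h : ChainJoins k E u v) : ChainJoins k E v u :=
  let ⟨w, hw, hwE, hu, hv⟩ := h; ⟨w, hw, hwE, hv, hu⟩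

lemma chainJoins_of_mem {e : Finset V} {u v : V} (hk : 2 ≤ k) (he : e ∈ E) (hcard : #e = k)
    (hu : u ∈ e) (hv : v ∈ e) : ChainJoins k E u v := by
  have hlen : e.toList.length = k := by rw [length_toList, hcard]
  have hwin : windows k e.toList = [e] := by rw [windows_of_length_eq hlen, toList_toFinset]
  refine ⟨e.toList, ⟨hlen.ge, head?_ne_getLast?_of_nodup (nodup_toList e) (by omega), ?_, ?_⟩,
    ?_, mem_toList.2 hu, mem_toList.2 hv⟩
  · simpa [hwin] using hcard
  · simp [hwin]
  · simpa [hwin] using he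

lemma chainJoins_of_insert {M : Finset V} {a b : V} (hk : 1 ≤ k) (ha : insert a M ∈ E)
    (hb : insert b M ∈ E) (hM : #M = k - 1) (haM : a ∉ M) (hbM : b ∉ M) (hab : a ≠ b) :
    ChainJoins k E a b := by
  have hwin := windows_cons_toList_append (a := a) (b := b) hk hM
  have hne : insert a M ≠ insert b M := fun h =>
    (mem_insert.1 (h ▸ mem_insert_self a M)).elim hab haM
  refine ⟨a :: (M.toList ++ [b]), ⟨by simp [hM]; omega, ?_, ?_, ?_⟩, ?_, by simp, by simp⟩
  · rw [← List.cons_append, List.getLast?_concat]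
    simpa using hab
  · simp [hwin, card_insert_of_notMem haM, card_insert_of_notMem hbM, hM]
    omega
  · simpa [hwin] using hne
  · simpa [hwin] using ⟨ha, hb⟩

end Chains

section Rows

variable {R : Type*}

def MeetsTwoRows (ρ : V → R) (E : Finset (Finset V)) : Prop :=
  ∀ e ∈ E, ∃ x ∈ e, ∃ y ∈ e, ρ x ≠ ρ y

def CrossPairsUnique (ρ : V → R) (E : Finset (Finset V)) : Prop :=
  ∀ e ∈ E, ∀ f ∈ E, ∀ x ∈ e, ∀ y ∈ e, x ∈ f → y ∈ f → ρ x ≠ ρ y → e = f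

def ExchangesInRow (k : ℕ) (ρ : V → R) (E : Finset (Finset V)) : Prop :=
  ∀ e ∈ E, ∀ f ∈ E, e ≠ f → k - 1 ≤ #(e ∩ f) →
    ∀ x ∈ e, x ∉ f → ∀ y ∈ f, y ∉ e → ρ x = ρ y

variable {ρ : V → R} {k : ℕ} {E : Finset (Finset V)}

/-- Windows `0`, `1` and windows `1`, `2` are pairs of distinct edges sharing `k - 1 ≥ 2`
vertices, so each overlap lies in one row; as the overlaps meet, window `1` would lie in one
row. -/
lemma length_le_of_windows_mem (hk : 3 ≤ k) (hspan : MeetsTwoRows ρ E)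
    (huniq : CrossPairsUnique ρ E)
    {w : List V} (hnd : (windows k w).Nodup) (hw : ∀ e ∈ windows k w, e ∈ E) :
    w.length ≤ k + 1 := by
  by_contra! hlen
  have hmem : ∀ i ≤ 2, window k w i ∈ E := fun i hi => hw _ (window_mem_windows (by omega))
  have hrow : ∀ i ≤ 1, ∀ a b (ha : a < w.length) (hb : b < w.length),
      i + 1 ≤ a → a < i + k → i + 1 ≤ b → b < i + k → ρ w[a] = ρ w[b] := by
    intro i hi a b ha hb ha1 ha2 hb1 hb2
    by_contra hne
    exact window_ne_window hnd (i := i) (i' := i + 1) (by omega) (by omega) (by omega) <|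
      huniq _ (hmem i (by omega)) _ (hmem (i + 1) (by omega)) _
        (getElem_mem_window ha (by omega) ha2) _ (getElem_mem_window hb (by omega) hb2)
        (getElem_mem_window ha ha1 (by omega)) (getElem_mem_window hb hb1 (by omega)) hne
  have hrow1 : ∀ x ∈ window k w 1, ρ x = ρ w[2] := by
    intro x hx
    obtain ⟨a, ha, ha1, ha2, rfl⟩ := mem_window.1 hx
    by_cases ha' : a < k
    · exact hrow 0 (by omega) a 2 ha (by omega) (by omega) (by omega) (by omega) (by omega)
    · exact hrow 1 le_rfl a 2 ha (by omega) (by omega) ha2 le_rfl (by omega)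
  obtain ⟨x, hx, y, hy, hxy⟩ := hspan _ (hmem 1 (by omega))
  exact hxy ((hrow1 x hx).trans (hrow1 y hy).symm)

lemma exists_window_mem_of_ne (hk : 3 ≤ k) (hspan : MeetsTwoRows ρ E)
    (huniq : CrossPairsUnique ρ E) (hswap : ExchangesInRow k ρ E)
    {w : List V} (hw : IsChainSeq k w) (hwE : ∀ e ∈ windows k w, e ∈ E) {p q : V}
    (hp : p ∈ w) (hq : q ∈ w) (hpq : ρ p ≠ ρ q) : ∃ f ∈ windows k w, p ∈ f ∧ q ∈ f := by
  obtain ⟨hkw, -, hc, hnd⟩ := hw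
  have hlen := length_le_of_windows_mem hk hspan huniq hnd hwE
  have hW0 : window k w 0 ∈ windows k w := window_mem_windows (by omega)
  have key : ∀ x ∈ w, ∀ y ∈ w, ρ x ≠ ρ y → x ∉ window k w 0 →
      ∃ f ∈ windows k w, x ∈ f ∧ y ∈ f := by
    intro x hx y hy hxy hx0
    obtain ⟨hkx, rfl⟩ := (mem_window_zero_or_eq_getElem hlen hx).resolve_left hx0
    have hW1 : window k w 1 ∈ windows k w := window_mem_windows (by omega)
    have hx1 : w[k] ∈ window k w 1 := getElem_mem_window hkx (by omega) (by omega)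
    by_cases hy1 : y ∈ window k w 1
    · exact ⟨_, hW1, hx1, hy1⟩
    -- now `w[k]` and `y` are the vertices exchanged between windows `1` and `0`
    have hy0 := (mem_window_zero_or_eq_getElem hlen hy).resolve_right
      fun ⟨_, h⟩ => hy1 (h ▸ hx1)
    have hinter := le_card_window_inter_window_succ (i := 0) (by omega) (by omega) (hc _ hW1)
    rw [inter_comm] at hinter
    exact absurd (hswap _ (hwE _ hW1) _ (hwE _ hW0)
      (window_ne_window hnd (by omega) (by omega) one_ne_zero) hinter _ hx1 hx0 _ hy0 hy1) hxy
  by_cases hp0 : p ∈ window k w 0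
  · by_cases hq0 : q ∈ window k w 0
    · exact ⟨_, hW0, hp0, hq0⟩
    · obtain ⟨f, hf, hqf, hpf⟩ := key q hq p hp hpq.symm hq0
      exact ⟨f, hf, hpf, hqf⟩
  · exact key p hp q hq hpq hp0

lemma not_chainJoins_erase (hk : 3 ≤ k) (hspan : MeetsTwoRows ρ E)
    (huniq : CrossPairsUnique ρ E) (hswap : ExchangesInRow k ρ E)
    {e : Finset V} (he : e ∈ E) {p q : V} (hp : p ∈ e) (hq : q ∈ e) (hpq : ρ p ≠ ρ q) :
    ¬ ChainJoins k (E.erase e) p q := by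
  rintro ⟨w, hw, hwE, hpw, hqw⟩
  obtain ⟨f, hf, hpf, hqf⟩ := exists_window_mem_of_ne hk hspan huniq hswap hw
    (fun f hf => mem_of_mem_erase (hwE f hf)) hpw hqw hpq
  obtain ⟨hfe, hfE⟩ := mem_erase.1 (hwE f hf)
  exact hfe (huniq f hfE e he p hpf q hqf hp hq hpq)

lemma edgeMinimal_of_rows [Fintype V] (hk : 3 ≤ k) (hspan : MeetsTwoRows ρ E)
    (huniq : CrossPairsUnique ρ E) (hswap : ExchangesInRow k ρ E) :
    EdgeMinimal k E := by
  intro e he hconn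
  obtain ⟨x, hx, y, hy, hxy⟩ := hspan e he
  exact not_chainJoins_erase hk hspan huniq hswap he hx hy hxy
    (hconn x (mem_univ x) y (mem_univ y) (ne_of_apply_ne ρ hxy))

lemma semicycleFree_of_rows (hk : 3 ≤ k) (hspan : MeetsTwoRows ρ E)
    (huniq : CrossPairsUnique ρ E) :
    SemicycleFree k E := by
  rintro ⟨w, hw, hwE⟩
  have := hw.add_two_le_length (by omega)
  have := length_le_of_windows_mem hk hspan huniq hw.2.2.2 hwE
  omega

lemma chainsLenLE_two_of_rows (hk : 3 ≤ k) (hspan : MeetsTwoRows ρ E)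
    (huniq : CrossPairsUnique ρ E) :
    ChainsLenLE k 2 E := fun w hw hwE => by
  have := length_le_of_windows_mem hk hspan huniq hw.2.2.2 hwE
  omega

end Rows

section Grid

variable {α β : Type*} [DecidableEq α] [DecidableEq β]

/-- The paper's edge `{v_ij, v_rs₁, …, v_rsₖ₋₁}` for `s = {s₁, …, sₖ₋₁}`: apex `(i, j)`, body `s`
in row `r`. -/
def gridEdge (i : α) (j : β) (r : α) (s : Finset β) : Finset (α × β) :=
  insert (i, j) (s.image (Prod.mk r))

lemma mem_image_prodMk {r : α} {s : Finset β} {x : α × β} :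
    x ∈ s.image (Prod.mk r) ↔ x.1 = r ∧ x.2 ∈ s := by
  obtain ⟨a, b⟩ := x
  simp only [mem_image, Prod.mk.injEq]
  exact ⟨fun ⟨c, hc, hr, hb⟩ => ⟨hr.symm, hb ▸ hc⟩, fun ⟨hr, hb⟩ => ⟨b, hb, hr.symm, rfl⟩⟩

lemma mem_gridEdge {i r : α} {j : β} {s : Finset β} {x : α × β} :
    x ∈ gridEdge i j r s ↔ x = (i, j) ∨ x.1 = r ∧ x.2 ∈ s := by
  rw [gridEdge, mem_insert, mem_image_prodMk]

lemma card_gridEdge {i r : α} (hir : i ≠ r) (j : β) (s : Finset β) :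
    #(gridEdge i j r s) = #s + 1 := by
  rw [gridEdge, card_insert_of_notMem, card_image_of_injective _ (Prod.mk_right_injective r)]
  simpa using fun _ h => hir h.symm

lemma fst_eq_of_mem_gridEdge_of_ne {i r : α} {j : β} {s : Finset β} {x : α × β}
    (hx : x ∈ gridEdge i j r s) (hxa : x ≠ (i, j)) : x.1 = r :=
  ((mem_gridEdge.1 hx).resolve_left hxa).1

lemma eq_apex_of_mem_gridEdge_of_fst_lt [LinearOrder α] {i r : α} {j : β} {s : Finset β}
    (hir : i < r) {x y : α × β} (hx : x ∈ gridEdge i j r s) (hy : y ∈ gridEdge i j r s)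
    (hxy : x.1 < y.1) : x = (i, j) ∧ y.1 = r ∧ y.2 ∈ s := by
  rcases mem_gridEdge.1 hx with rfl | ⟨hx, -⟩ <;> rcases mem_gridEdge.1 hy with rfl | hy
  · exact absurd hxy (lt_irrefl _)
  · exact ⟨rfl, hy⟩
  · rw [hx] at hxy
    exact absurd hxy (not_lt.2 hir.le)
  · rw [hx, hy.1] at hxy
    exact absurd hxy (lt_irrefl r)

end Grid

section Baranyai

variable {k m l : ℕ} {B : ℕ → Finset (Finset (Fin m))}

def IsGridEdge (B : ℕ → Finset (Finset (Fin m))) (e : Finset (Fin (l + 1) × Fin m)) : Prop :=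
  ∃ i r : Fin (l + 1), i < r ∧ ∃ j, ∃ s ∈ B i, e = gridEdge i j r s

lemma Fin.val_lt_of_lt {i r : Fin (l + 1)} (h : i < r) : (i : ℕ) < l :=
  Fin.val_lt_last (h.trans_le (Fin.le_last r)).ne

namespace IsGridEdge

variable {e f : Finset (Fin (l + 1) × Fin m)}

lemma card (hk : 1 ≤ k) (hBu : ∀ i < l, ∀ s ∈ B i, #s = k - 1) (he : IsGridEdge B e) :
    #e = k := by
  obtain ⟨i, r, hir, j, s, hs, rfl⟩ := he
  rw [card_gridEdge hir.ne, hBu i (Fin.val_lt_of_lt hir) s hs]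
  omega

lemma exists_fst_ne (hk : 2 ≤ k) (hBu : ∀ i < l, ∀ s ∈ B i, #s = k - 1)
    (he : IsGridEdge B e) : ∃ x ∈ e, ∃ y ∈ e, x.1 ≠ y.1 := by
  obtain ⟨i, r, hir, j, s, hs, rfl⟩ := he
  obtain ⟨c, hc⟩ : s.Nonempty := card_pos.1 (by rw [hBu i (Fin.val_lt_of_lt hir) s hs]; omega)
  exact ⟨(i, j), mem_gridEdge.2 (Or.inl rfl), (r, c), mem_gridEdge.2 (Or.inr ⟨rfl, hc⟩), hir.ne⟩

lemma eq_of_mem (hBpart : ∀ i < l, ∀ x : Fin m, ∃! s, s ∈ B i ∧ x ∈ s)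
    (he : IsGridEdge B e) (hf : IsGridEdge B f) {x y : Fin (l + 1) × Fin m} (hxe : x ∈ e)
    (hye : y ∈ e) (hxf : x ∈ f) (hyf : y ∈ f) (hxy : x.1 ≠ y.1) : e = f := by
  wlog hlt : x.1 < y.1 generalizing x y
  · exact this hye hxe hyf hxf hxy.symm (hxy.symm.lt_of_le (not_lt.1 hlt))
  obtain ⟨i, r, hir, j, s, hs, rfl⟩ := he
  obtain ⟨i', r', hir', j', s', hs', rfl⟩ := hf
  obtain ⟨rfl, hyr, hys⟩ := eq_apex_of_mem_gridEdge_of_fst_lt hir hxe hye hlt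
  obtain ⟨hx', hyr', hys'⟩ := eq_apex_of_mem_gridEdge_of_fst_lt hir' hxf hyf hlt
  obtain ⟨rfl, rfl⟩ := Prod.mk.inj hx'
  obtain rfl : r = r' := hyr.symm.trans hyr'
  obtain rfl : s = s' := (hBpart i (Fin.val_lt_of_lt hir) y.2).unique ⟨hs, hys⟩ ⟨hs', hys'⟩
  rfl

/-- The apex `(i, j)` cannot be a common vertex: together with a second common vertex, which
lies in row `r`, it would force `e = f`. -/
lemma inter_subset_image (hBpart : ∀ i < l, ∀ x : Fin m, ∃! s, s ∈ B i ∧ x ∈ s)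
    {i r : Fin (l + 1)} {j : Fin m} {s : Finset (Fin m)} (hir : i < r)
    (he : IsGridEdge B (gridEdge i j r s)) (hf : IsGridEdge B f) (hne : gridEdge i j r s ≠ f)
    (h2 : 1 < #(gridEdge i j r s ∩ f)) : gridEdge i j r s ∩ f ⊆ s.image (Prod.mk r) := by
  intro z hz
  obtain ⟨hze, hzf⟩ := mem_inter.1 hz
  rcases mem_gridEdge.1 hze with rfl | hbody
  · obtain ⟨z', hz', hz'ne⟩ := exists_mem_ne h2 (i, j)
    obtain ⟨hz'e, hz'f⟩ := mem_inter.1 hz'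
    have hr : z'.1 = r := fst_eq_of_mem_gridEdge_of_ne hz'e hz'ne
    exact absurd (he.eq_of_mem hBpart hf hze hz'e hzf hz'f (hr ▸ hir.ne)) hne
  · exact mem_image_prodMk.2 hbody

lemma fst_eq_of_le_card_inter (hk : 3 ≤ k) (hBu : ∀ i < l, ∀ s ∈ B i, #s = k - 1)
    (hBpart : ∀ i < l, ∀ x : Fin m, ∃! s, s ∈ B i ∧ x ∈ s)
    (hBdisj : ∀ i < l, ∀ j < l, i ≠ j → Disjoint (B i) (B j))
    (he : IsGridEdge B e) (hf : IsGridEdge B f) (hne : e ≠ f) (hcard : k - 1 ≤ #(e ∩ f))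
    {x y : Fin (l + 1) × Fin m} (hxe : x ∈ e) (hxf : x ∉ f) (hyf : y ∈ f) (hye : y ∉ e) :
    x.1 = y.1 := by
  obtain ⟨i, r, hir, j, s, hs, rfl⟩ := id he
  obtain ⟨i', r', hir', j', s', hs', rfl⟩ := id hf
  have hsk := hBu i (Fin.val_lt_of_lt hir) s hs
  have hbody : gridEdge i j r s ∩ gridEdge i' j' r' s' = s.image (Prod.mk r) := by
    refine eq_of_subset_of_card_le (inter_subset_image hBpart hir he hf hne (by omega)) ?_
    rwa [card_image_of_injective _ (Prod.mk_right_injective r), hsk]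
  have hbody' : gridEdge i j r s ∩ gridEdge i' j' r' s' = s'.image (Prod.mk r') := by
    rw [inter_comm] at hcard ⊢
    refine eq_of_subset_of_card_le (inter_subset_image hBpart hir' hf he hne.symm (by omega)) ?_
    rwa [card_image_of_injective _ (Prod.mk_right_injective r'),
      hBu i' (Fin.val_lt_of_lt hir') s' hs']
  obtain ⟨c, hc⟩ : s.Nonempty := card_pos.1 (by omega)
  obtain rfl : r = r' := (mem_image_prodMk.1 (hbody' ▸ hbody ▸ mem_image_of_mem _ hc)).1
  obtain rfl : s = s' := (image_inj (Prod.mk_right_injective r)).1 (hbody.symm.trans hbody')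
  obtain rfl : i = i' := by
    by_contra hii
    exact disjoint_left.1 (hBdisj i (Fin.val_lt_of_lt hir) i' (Fin.val_lt_of_lt hir')
      (Fin.val_injective.ne hii)) hs hs'
  have hx : x = (i, j) := (mem_gridEdge.1 hxe).resolve_right fun h =>
    hxf (mem_of_mem_inter_right (hbody ▸ mem_image_prodMk.2 h))
  have hy : y = (i, j') := (mem_gridEdge.1 hyf).resolve_right fun h =>
    hye (mem_of_mem_inter_left (hbody ▸ mem_image_prodMk.2 h))
  rw [hx, hy]

end IsGridEdge

variable {E : Finset (Finset (Fin (l + 1) × Fin m))}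

lemma chainJoins_of_fst_lt (hk : 2 ≤ k) (hE : ∀ e, e ∈ E ↔ IsGridEdge B e)
    (hBu : ∀ i < l, ∀ s ∈ B i, #s = k - 1)
    (hBpart : ∀ i < l, ∀ x : Fin m, ∃! s, s ∈ B i ∧ x ∈ s)
    {a c : Fin (l + 1)} (hac : a < c) (b d : Fin m) : ChainJoins k E (a, b) (c, d) := by
  obtain ⟨s, ⟨hs, hds⟩, -⟩ := hBpart a (Fin.val_lt_of_lt hac) d
  have he : IsGridEdge B (gridEdge a b c s) := ⟨a, c, hac, b, s, hs, rfl⟩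
  exact chainJoins_of_mem hk ((hE _).2 he) (he.card (by omega) hBu)
    (mem_gridEdge.2 (Or.inl rfl)) (mem_gridEdge.2 (Or.inr ⟨rfl, hds⟩))

/-- Below the top row, two vertices are the apexes of two edges with a common body in the top
row; two vertices of the top row lie in the body of an edge whose body is any `(k - 1)`-set of
columns containing both. -/
lemma chainJoins_of_fst_eq (hk : 3 ≤ k) (hm : k - 1 ≤ m) (hE : ∀ e, e ∈ E ↔ IsGridEdge B e)
    (hBu : ∀ i < l, ∀ s ∈ B i, #s = k - 1)
    (hBpart : ∀ i < l, ∀ x : Fin m, ∃! s, s ∈ B i ∧ x ∈ s)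
    (hBcover : ∀ s : Finset (Fin m), #s = k - 1 → ∃ i < l, s ∈ B i)
    (a : Fin (l + 1)) {b d : Fin m} (hbd : b ≠ d) : ChainJoins k E (a, b) (a, d) := by
  by_cases ha : a = Fin.last l
  · subst ha
    obtain ⟨s, hbds, -, hs⟩ := exists_subsuperset_card_eq (n := k - 1) (subset_univ {b, d})
      (card_le_two.trans (by omega)) (by simpa using hm)
    obtain ⟨i, hi, hsi⟩ := hBcover s hs
    have he : IsGridEdge B (gridEdge (⟨i, by omega⟩ : Fin (l + 1)) b (Fin.last l) s) :=
      ⟨_, _, Fin.lt_last_iff_ne_last.2 (Fin.ne_of_val_ne hi.ne), b, s, hsi, rfl⟩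
    exact chainJoins_of_mem (by omega) ((hE _).2 he) (he.card (by omega) hBu)
      (mem_gridEdge.2 (Or.inr ⟨rfl, hbds (by simp)⟩))
      (mem_gridEdge.2 (Or.inr ⟨rfl, hbds (by simp)⟩))
  · have hal : (a : ℕ) < l := Fin.val_lt_last ha
    obtain ⟨s, ⟨hs, -⟩, -⟩ := hBpart a hal b
    have he : ∀ c, IsGridEdge B (gridEdge a c (Fin.last l) s) :=
      fun c => ⟨a, _, Fin.lt_last_iff_ne_last.2 ha, c, s, hs, rfl⟩
    have hnot : ∀ c, (a, c) ∉ s.image (Prod.mk (Fin.last l)) := fun c h =>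
      ha (mem_image_prodMk.1 h).1
    exact chainJoins_of_insert (by omega) ((hE _).2 (he b)) ((hE _).2 (he d))
      (by rw [card_image_of_injective _ (Prod.mk_right_injective _), hBu a hal s hs])
      (hnot b) (hnot d) (by simpa using hbd)

lemma chainConn_of_isGridEdge (hk : 3 ≤ k) (hm : (k - 1) ∣ m) (hE : ∀ e, e ∈ E ↔ IsGridEdge B e)
    (hBu : ∀ i < l, ∀ s ∈ B i, #s = k - 1)
    (hBpart : ∀ i < l, ∀ x : Fin m, ∃! s, s ∈ B i ∧ x ∈ s)
    (hBcover : ∀ s : Finset (Fin m), #s = k - 1 → ∃ i < l, s ∈ B i) : ChainConn k E := by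
  rintro ⟨a, b⟩ - ⟨c, d⟩ - huv
  rcases lt_trichotomy a c with hac | rfl | hca
  · exact chainJoins_of_fst_lt (by omega) hE hBu hBpart hac b d
  · exact chainJoins_of_fst_eq hk (Nat.le_of_dvd b.pos hm) hE hBu hBpart hBcover a
      fun h => huv (h ▸ rfl)
  · exact (chainJoins_of_fst_lt (by omega) hE hBu hBpart hca d b).symm

end Baranyai

theorem stmt15_general (k m l : ℕ) (hk : 3 ≤ k) (hm : (k - 1) ∣ m)
    (B : ℕ → Finset (Finset (Fin m)))
    (hBu : ∀ i < l, ∀ s ∈ B i, s.card = k - 1)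
    (hBpart : ∀ i < l, ∀ x : Fin m, ∃! s, s ∈ B i ∧ x ∈ s)
    (hBdisj : ∀ i < l, ∀ j < l, i ≠ j → Disjoint (B i) (B j))
    (hBcover : ∀ s : Finset (Fin m), s.card = k - 1 → ∃ i < l, s ∈ B i)
    (E : Finset (Finset (Fin (l + 1) × Fin m)))
    (hE : ∀ e, e ∈ E ↔ ∃ i r : ℕ, ∃ j : Fin m, ∃ s ∈ B i,
      ∃ (hi : i < l) (hr : r < l + 1), i < r ∧
        e = insert (⟨i, Nat.lt_succ_of_lt hi⟩, j) (s.image fun x => (⟨r, hr⟩, x))) :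
    IsLHypertree k 2 E ∧ EdgeMinimal k E ∧
    (∀ e ∈ E, ∀ p ∈ e, ∀ q ∈ e, p.1 ≠ q.1 →
      ¬ ∃ w : List (Fin (l + 1) × Fin m), IsChainSeq k w ∧
        (∀ f ∈ windows k w, f ∈ E.erase e) ∧ p ∈ w ∧ q ∈ w) := by
  have hgrid : ∀ e, e ∈ E ↔ IsGridEdge B e := fun e => by
    rw [hE]
    constructor
    · rintro ⟨i, r, j, s, hs, hi, hr, hir, rfl⟩
      exact ⟨_, _, hir, j, s, hs, rfl⟩
    · rintro ⟨i, r, hir, j, s, hs, rfl⟩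
      exact ⟨i, r, j, s, hs, Fin.val_lt_of_lt hir, r.isLt, hir, rfl⟩
  have hspan : MeetsTwoRows Prod.fst E := fun e he =>
    ((hgrid e).1 he).exists_fst_ne (by omega) hBu
  have huniq : CrossPairsUnique Prod.fst E := fun e he f hf x hx y hy hxf hyf =>
    ((hgrid e).1 he).eq_of_mem hBpart ((hgrid f).1 hf) hx hy hxf hyf
  have hswap : ExchangesInRow k Prod.fst E := fun e he f hf hne hcard x hx hxf y hy hye =>
    ((hgrid e).1 he).fst_eq_of_le_card_inter hk hBu hBpart hBdisj ((hgrid f).1 hf) hne hcard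
      hx hxf hy hye
  exact ⟨⟨⟨fun e he => ((hgrid e).1 he).card (by omega) hBu,
    chainConn_of_isGridEdge hk hm hgrid hBu hBpart hBcover,
    semicycleFree_of_rows hk hspan huniq⟩, chainsLenLE_two_of_rows hk hspan huniq⟩,
    edgeMinimal_of_rows hk hspan huniq hswap,
    fun e he p hp q hq hpq => not_chainJoins_erase hk hspan huniq hswap he hp hq hpq⟩

/-- the Baranyai grid hypergraph is an edge-minimal 2-hypertree,
and deleting any edge disconnects each of its cross-row pairs. -/
theorem stmt15 (k m l : ℕ) (hk : 3 ≤ k) (hm : (k - 1) ∣ m)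
    (hl : l = (m - 1).choose (k - 2))
    (B : ℕ → Finset (Finset (Fin m)))
    (hBu : ∀ i < l, ∀ s ∈ B i, s.card = k - 1)
    (hBpart : ∀ i < l, ∀ x : Fin m, ∃! s, s ∈ B i ∧ x ∈ s)
    (hBdisj : ∀ i < l, ∀ j < l, i ≠ j → Disjoint (B i) (B j))
    (hBcover : ∀ s : Finset (Fin m), s.card = k - 1 → ∃ i < l, s ∈ B i)
    (E : Finset (Finset (Fin (l + 1) × Fin m)))
    (hE : ∀ e, e ∈ E ↔ ∃ i r : ℕ, ∃ j : Fin m, ∃ s ∈ B i,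
      ∃ (hi : i < l) (hr : r < l + 1), i < r ∧
        e = insert (⟨i, Nat.lt_succ_of_lt hi⟩, j) (s.image fun x => (⟨r, hr⟩, x))) :
    IsLHypertree k 2 E ∧ EdgeMinimal k E ∧
    (∀ e ∈ E, ∀ p ∈ e, ∀ q ∈ e, p.1 ≠ q.1 →
      ¬ ∃ w : List (Fin (l + 1) × Fin m), IsChainSeq k w ∧
        (∀ f ∈ windows k w, f ∈ E.erase e) ∧ p ∈ w ∧ q ∈ w) :=
  stmt15_general k m l hk hm B hBu hBpart hBdisj hBcover E hE
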